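/- For every infinite sequence 𝐭 over A and every integer n ≥ 1, the number of distinct boolean factors of length n of the infinite Stewart word T(𝐭) is exactly 2n. -/

import Mathlib

/-- The alphabet B = {0, 1, ?}. -/
inductive B : Type
  | b0 : B
  | b1 : B
  | bq : B
deriving DecidableEq, Inhabited, Repr

/-- The six Stewart patterns a = 01?, b = 10?, c = 0?1, d = 1?0, e = ?01, f = ?10. -/
inductive A : Type
  | a : A
  | b : A
  | c : A
  | d : A
  | e : A
  | f : A
deriving DecidableEq, Inhabited, Repr

open B in
/-- The length-3 word over B associated with a Stewart pattern. -/
def pat : A → List B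
  | .a => [b0, b1, bq]
  | .b => [b1, b0, bq]
  | .c => [b0, bq, b1]
  | .d => [b1, bq, b0]
  | .e => [bq, b0, b1]
  | .f => [bq, b1, b0]

/-- Replace the occurrences of `?` in the first word, in order,
by the symbols of the second word. -/
def fill : List B → List B → List B
  | [], _ => []
  | B.bq :: rest, s :: ss => s :: fill rest ss
  | B.bq :: rest, [] => B.bq :: fill rest []
  | x :: rest, ss => x :: fill rest ss

/-- Helper: the finite Stewart word of the *reverse* of `t`. -/
def Trev : List A → List B
  | [] => [B.bq]
  | g :: t => fill (Trev t ++ Trev t ++ Trev t) (pat g)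

/-- The finite Stewart word `T(t)`, of length `3 ^ t.length`:
`T(ε) = ?`, and `T(t g)` is obtained from `T(t)T(t)T(t)` by replacing its
three occurrences of `?`, in order, by the three symbols of the pattern `g`. -/
def stewT (t : List A) : List B := Trev t.reverse

/-- The length-`r` prefix of an infinite sequence of Stewart patterns, as a list. -/
def prefT (t : ℕ → A) (r : ℕ) : List A := List.ofFn (fun i : Fin r => t i)

/-- The infinite Stewart word `T(𝐭)`: its symbol at position `n` is the eventual
value of `T(t_0 ⋯ t_{r-1})[n]` as `r → ∞`. -/
noncomputable def stewInf (t : ℕ → A) (n : ℕ) : B :=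
  Classical.epsilon (fun v : B => ∃ R : ℕ, ∀ r ≥ R, (stewT (prefT t r)).getD n B.bq = v)

/-- `w` occurs as a factor of the infinite word `x`. -/
def FactorOf (w : List B) (x : ℕ → B) : Prop :=
  ∃ i : ℕ, ∀ j : ℕ, j < w.length → w.getD j B.bq = x (i + j)

/-- `w` has period `p ≥ 1`: `w[i] = w[i+p]` for all `0 ≤ i < |w| - p`. -/
def HasPeriod (w : List B) (p : ℕ) : Prop :=
  1 ≤ p ∧ ∀ i : ℕ, i + p < w.length → w.getD i B.bq = w.getD (i + p) B.bq

/-- The least period `per(w)` of a word. -/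
noncomputable def leastPeriod (w : List B) : ℕ := sInf {p | HasPeriod w p}

/-- The exponent `exp(w) = |w| / per(w)` of a word. -/
noncomputable def expo (w : List B) : ℝ := (w.length : ℝ) / (leastPeriod w : ℝ)

/-- The Hamming distance between two Stewart patterns: the number of positions
`p ∈ {0,1,2}` at which the length-3 words differ. -/
def ham (g h : A) : ℕ :=
  (Finset.univ.filter fun p : Fin 3 => (pat g).getD p B.bq ≠ (pat h).getD p B.bq).card

/-- `t` is ultimately periodic. -/
def UltPeriodic (t : ℕ → A) : Prop :=
  ∃ N : ℕ, ∃ p : ℕ, 1 ≤ p ∧ ∀ n ≥ N, t (n + p) = t n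

/-- An infinite word `x` is 3-automatic: there is a finite automaton with output,
reading base-3 representations least-significant-digit first (trailing zeros
allowed), computing `x`. -/
def IsThreeAutomatic (x : ℕ → B) : Prop :=
  ∃ (Q : Type) (_ : Finite Q) (δ : Q → Fin 3 → Q) (q0 : Q) (τ : Q → B),
    ∀ (r : ℕ) (e : Fin r → Fin 3),
      τ (List.foldl δ q0 (List.ofFn fun i => e i)) =
        x (∑ i : Fin r, (e i).val * 3 ^ (i : ℕ))

/-! ### Auxiliary definitions -/

def qv : A → ℕ
  | .a => 2 | .b => 2 | .c => 1 | .d => 1 | .e => 0 | .f => 0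

def hole : List A → ℕ
  | [] => 0
  | g :: u => qv g + 3 * hole u

def sval : List A → ℕ → B
  | [], _ => B.bq
  | g :: u, m => if m % 3 = qv g then sval u (m / 3) else (pat g).getD (m % 3) B.bq

def replQ (b c : B) : B := if c = B.bq then b else c

def Xw (u : List A) (b : B) (j : ℕ) : B := replQ b (sval u j)

def win (u : List A) (b : B) (i n : ℕ) : List B := List.ofFn fun k : Fin n => Xw u b (i + k)

def Uset (u : List A) (n : ℕ) : Set (List B) :=
  {w | ∃ b, (b = B.b0 ∨ b = B.b1) ∧ ∃ i, w = win u b i n}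

/-! ### pat lemmas -/

lemma qv_lt (g : A) : qv g < 3 := by cases g <;> simp [qv]

lemma pat_getD_qv (g : A) : (pat g).getD (qv g) B.bq = B.bq := by cases g <;> rfl

lemma pat_getD_ne_bq (g : A) {r : ℕ} (h3 : r < 3) (hq : r ≠ qv g) :
    (pat g).getD r B.bq ≠ B.bq := by
  interval_cases r <;> cases g <;> simp_all [pat, qv]

lemma pat_inj (g : A) {r r' : ℕ} (h3 : r < 3) (h3' : r' < 3) (hne : r ≠ r')
    (hq : r ≠ qv g) (hq' : r' ≠ qv g) :
    (pat g).getD r B.bq ≠ (pat g).getD r' B.bq := by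
  interval_cases r <;> interval_cases r' <;> cases g <;> simp_all [pat, qv]

lemma pat_surj (g : A) (b : B) (hb : b = B.b0 ∨ b = B.b1) :
    ∃ d, d < 3 ∧ d ≠ qv g ∧ (pat g).getD d B.bq = b := by
  rcases hb with rfl | rfl <;> cases g <;>
    first
      | exact ⟨0, by norm_num, by simp [qv], rfl⟩
      | exact ⟨1, by norm_num, by simp [qv], rfl⟩
      | exact ⟨2, by norm_num, by simp [qv], rfl⟩

/-! ### sval lemmas -/

lemma sval_mod (u : List A) (m : ℕ) : sval u (m % 3 ^ u.length) = sval u m := by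
  induction u generalizing m with
  | nil => rfl
  | cons g u ih =>
    have h3 : (3:ℕ) ^ (g :: u).length = 3 * 3 ^ u.length := by
      simp [List.length_cons, pow_succ, mul_comm]
    rw [sval, sval, h3, Nat.mod_mul_right_mod]
    by_cases h : m % 3 = qv g
    · simp only [h, if_pos]
      have : m % (3 * 3 ^ u.length) / 3 = m / 3 % 3 ^ u.length := by
        rw [Nat.mod_mul]
        omega
      rw [this, ih]
    · simp [h]

lemma sval_congr (u : List A) {m m' : ℕ} (h : m % 3 ^ u.length = m' % 3 ^ u.length) :
    sval u m = sval u m' := by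
  rw [← sval_mod u m, ← sval_mod u m', h]

lemma hole_lt (u : List A) : hole u < 3 ^ u.length := by
  induction u with
  | nil => simp [hole]
  | cons g u ih =>
    have := qv_lt g
    simp only [hole, List.length_cons, pow_succ]
    omega

lemma sval_eq_bq_iff (u : List A) (m : ℕ) :
    sval u m = B.bq ↔ m % 3 ^ u.length = hole u := by
  induction u generalizing m with
  | nil => simp [sval, hole, Nat.mod_one]
  | cons g u ih =>
    have h3 : (3:ℕ) ^ (g :: u).length = 3 * 3 ^ u.length := by
      simp [List.length_cons, pow_succ, mul_comm]
    rw [sval, h3, Nat.mod_mul, hole]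
    by_cases h : m % 3 = qv g
    · rw [if_pos h, ih]
      constructor
      · intro hh; omega
      · intro hh
        have h1 : m / 3 % 3 ^ u.length < 3 ^ u.length := Nat.mod_lt _ (by positivity)
        have h2 := hole_lt u
        have := qv_lt g
        omega
    · rw [if_neg h]
      constructor
      · intro hh; exact absurd hh (pat_getD_ne_bq g (Nat.mod_lt _ (by norm_num)) h)
      · intro hh
        have h1 : m / 3 % 3 ^ u.length < 3 ^ u.length := Nat.mod_lt _ (by positivity)
        have := qv_lt g
        have := Nat.mod_lt m (show 0 < 3 by norm_num)
        omega

lemma sval_append (u v : List A) (m : ℕ) :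
    sval (u ++ v) m = if sval u m = B.bq then sval v (m / 3 ^ u.length) else sval u m := by
  induction u generalizing m with
  | nil => simp [sval]
  | cons g u ih =>
    by_cases h : m % 3 = qv g
    · simp only [List.cons_append, sval, if_pos h, List.append_eq]
      have h2 : (3:ℕ) * 3 ^ u.length = 3 ^ (g :: u).length := by
        rw [List.length_cons, pow_succ]; ring
      rw [ih, Nat.div_div_eq_div_mul, h2]
    · have hne := pat_getD_ne_bq g (Nat.mod_lt m (show 0 < 3 by norm_num)) h
      simp only [List.cons_append, sval, if_neg h, if_neg hne]

lemma Xw_ne_bq (u : List A) {b : B} (hb : b = B.b0 ∨ b = B.b1) (j : ℕ) :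
    Xw u b j ≠ B.bq := by
  unfold Xw replQ
  split
  · rcases hb with rfl | rfl <;> simp
  · assumption

lemma Xw_congr (u : List A) (b : B) {m m' : ℕ} (h : m % 3 ^ u.length = m' % 3 ^ u.length) :
    Xw u b m = Xw u b m' := by
  unfold Xw; rw [sval_congr u h]

/-! ### fill and stewT structure -/

lemma fill_b0 (rest s : List B) : fill (B.b0 :: rest) s = B.b0 :: fill rest s := by
  cases s <;> rfl

lemma fill_b1 (rest s : List B) : fill (B.b1 :: rest) s = B.b1 :: fill rest s := by
  cases s <;> rfl

lemma fill_bq_cons (rest ss : List B) (s : B) : fill (B.bq :: rest) (s :: ss) = s :: fill rest ss := rfl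

lemma fill_nil (M : List B) : fill M [] = M := by
  induction M with
  | nil => rfl
  | cons x M ih =>
    cases x with
    | b0 => rw [fill_b0, ih]
    | b1 => rw [fill_b1, ih]
    | bq => show B.bq :: fill M [] = _; rw [ih]

lemma fill_append_noq (L M s : List B) (h : ∀ x ∈ L, x ≠ B.bq) :
    fill (L ++ M) s = L ++ fill M s := by
  induction L generalizing s with
  | nil => simp
  | cons x L ih =>
    have hx : x ≠ B.bq := h x (by simp)
    cases x with
    | b0 => simp only [List.cons_append, fill_b0, ih _ (fun y hy => h y (by simp [hy]))]
    | b1 => simp only [List.cons_append, fill_b1, ih _ (fun y hy => h y (by simp [hy]))]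
    | bq => exact absurd rfl hx

lemma stewT_concat (u : List A) (g : A) :
    stewT (u ++ [g]) = fill (stewT u ++ stewT u ++ stewT u) (pat g) := by
  simp [stewT, List.reverse_append, Trev]

lemma hole_concat (u : List A) (g : A) :
    hole (u ++ [g]) = hole u + qv g * 3 ^ u.length := by
  induction u with
  | nil => simp [hole]
  | cons h u ih =>
    show qv h + 3 * hole (u ++ [g]) = qv h + 3 * hole u + qv g * 3 ^ (u.length + 1)
    rw [ih, pow_succ]; ring

theorem stewT_struct (u : List A) :
    ∃ L R : List B, stewT u = L ++ [B.bq] ++ R ∧ (∀ x ∈ L, x ≠ B.bq) ∧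
      (∀ x ∈ R, x ≠ B.bq) ∧ L.length = hole u ∧ (stewT u).length = 3 ^ u.length := by
  induction u using List.reverseRecOn with
  | nil => exact ⟨[], [], rfl, by simp, by simp, rfl, rfl⟩
  | append_singleton u g ih =>
    obtain ⟨L, R, hw, hL, hR, hLlen, hlen⟩ := ih
    -- stewT (u ++ [g]) = fill (W ++ W ++ W) (pat g) with W = L ++ [bq] ++ R
    have key : ∀ p0 p1 p2 : B, pat g = [p0, p1, p2] →
        stewT (u ++ [g]) =
          (L ++ [p0] ++ R) ++ (L ++ [p1] ++ R) ++ (L ++ [p2] ++ R) := by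
      intro p0 p1 p2 hp
      rw [stewT_concat, hw, hp]
      rw [show (L ++ [B.bq] ++ R) ++ (L ++ [B.bq] ++ R) ++ (L ++ [B.bq] ++ R)
          = L ++ (B.bq :: (R ++ L ++ (B.bq :: (R ++ L ++ (B.bq :: R))))) by simp,
        fill_append_noq _ _ _ hL, fill_bq_cons,
        show R ++ L ++ (B.bq :: (R ++ L ++ (B.bq :: R))) =
          (R ++ L) ++ (B.bq :: (R ++ L ++ (B.bq :: R))) by simp,
        fill_append_noq _ _ _ (by intro x hx; rcases List.mem_append.1 hx with h | h
                                  exacts [hR x h, hL x h]),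
        fill_bq_cons,
        show R ++ L ++ (B.bq :: R) = (R ++ L) ++ (B.bq :: R) by simp,
        fill_append_noq _ _ _ (by intro x hx; rcases List.mem_append.1 hx with h | h
                                  exacts [hR x h, hL x h]),
        fill_bq_cons]
      have : fill R [] = R := by
        clear hw hLlen
        induction R with
        | nil => rfl
        | cons x R ihR =>
          have hx : x ≠ B.bq := hR x (by simp)
          cases x with
          | b0 => rw [fill_b0, ihR (fun y hy => hR y (by simp [hy]))]
          | b1 => rw [fill_b1, ihR (fun y hy => hR y (by simp [hy]))]
          | bq => exact absurd rfl hx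
      rw [this]; simp
    obtain ⟨p0, p1, p2, hp⟩ : ∃ x y z, pat g = [x, y, z] := by
      cases g <;> exact ⟨_, _, _, rfl⟩
    have hkey := key p0 p1 p2 hp
    have hWlen : L.length + 1 + R.length = 3 ^ u.length := by
      rw [hw] at hlen
      simp only [List.length_append, List.length_singleton] at hlen; omega
    have hplen : (stewT (u ++ [g])).length = 3 ^ (u ++ [g]).length := by
      rw [hkey]
      simp only [List.length_append, List.length_singleton, List.length_cons]
      simp [pow_succ]
      omega
    have hgd : ∀ c, c < 3 → c ≠ qv g → [p0, p1, p2].getD c B.bq ≠ B.bq := by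
      intro c hC hcq
      have := pat_getD_ne_bq g hC hcq
      rwa [hp] at this
    have hgq : [p0, p1, p2].getD (qv g) B.bq = B.bq := by
      have := pat_getD_qv g; rwa [hp] at this
    have hhole := hole_concat u g
    have hq3 := qv_lt g
    interval_cases hqv : qv g
    · have hp0 : p0 = B.bq := hgq
      have hp1 : p1 ≠ B.bq := hgd 1 (by norm_num) (by omega)
      have hp2 : p2 ≠ B.bq := hgd 2 (by norm_num) (by omega)
      refine ⟨L, R ++ (L ++ [p1] ++ R) ++ (L ++ [p2] ++ R), ?_, hL, ?_, ?_, hplen⟩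
      · rw [hkey, hp0]; simp
      · intro x hx
        have hx' : x ∈ L ∨ x ∈ R ∨ x = p1 ∨ x = p2 := by
          simp only [List.mem_append, List.mem_singleton] at hx; tauto
        rcases hx' with h|h|h|h
        exacts [hL x h, hR x h, (h ▸ hp1), (h ▸ hp2)]
      · rw [hhole]; omega
    · have hp1 : p1 = B.bq := hgq
      have hp0 : p0 ≠ B.bq := hgd 0 (by norm_num) (by omega)
      have hp2 : p2 ≠ B.bq := hgd 2 (by norm_num) (by omega)
      refine ⟨(L ++ [p0] ++ R) ++ L, R ++ (L ++ [p2] ++ R), ?_, ?_, ?_, ?_, hplen⟩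
      · rw [hkey, hp1]; simp
      · intro x hx
        have hx' : x ∈ L ∨ x ∈ R ∨ x = p0 := by
          simp only [List.mem_append, List.mem_singleton] at hx; tauto
        rcases hx' with h|h|h
        exacts [hL x h, hR x h, (h ▸ hp0)]
      · intro x hx
        have hx' : x ∈ L ∨ x ∈ R ∨ x = p2 := by
          simp only [List.mem_append, List.mem_singleton] at hx; tauto
        rcases hx' with h|h|h
        exacts [hL x h, hR x h, (h ▸ hp2)]
      · rw [hhole]
        simp only [List.length_append, List.length_singleton, hLlen]; omega
    · have hp2 : p2 = B.bq := hgq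
      have hp0 : p0 ≠ B.bq := hgd 0 (by norm_num) (by omega)
      have hp1 : p1 ≠ B.bq := hgd 1 (by norm_num) (by omega)
      refine ⟨(L ++ [p0] ++ R) ++ (L ++ [p1] ++ R) ++ L, R, ?_, ?_, hR, ?_, hplen⟩
      · rw [hkey, hp2]; simp
      · intro x hx
        have hx' : x ∈ L ∨ x ∈ R ∨ x = p0 ∨ x = p1 := by
          simp only [List.mem_append, List.mem_singleton] at hx; tauto
        rcases hx' with h|h|h|h
        exacts [hL x h, hR x h, (h ▸ hp0), (h ▸ hp1)]
      · rw [hhole]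
        simp only [List.length_append, List.length_singleton, hLlen]; omega

lemma stewT_length (u : List A) : (stewT u).length = 3 ^ u.length := by
  obtain ⟨_, _, _, _, _, _, h⟩ := stewT_struct u
  exact h

lemma sval_single (g : A) (x : ℕ) : sval [g] x = (pat g).getD (x % 3) B.bq := by
  unfold sval
  split
  · next h => rw [h, pat_getD_qv]; rfl
  · rfl

theorem stewT_getD (u : List A) : ∀ m, m < 3 ^ u.length →
    (stewT u).getD m B.bq = sval u m := by
  induction u using List.reverseRecOn with
  | nil =>
    intro m hm
    have h0 : m = 0 := by simp at hm; omega
    subst h0; rfl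
  | append_singleton u g ih =>
    intro m hm
    obtain ⟨L, R, hw, hL, hR, hLlen, hlen⟩ := stewT_struct u
    obtain ⟨p0, p1, p2, hp⟩ : ∃ x y z, pat g = [x, y, z] := by
      cases g <;> exact ⟨_, _, _, rfl⟩
    have hWlen : L.length + 1 + R.length = 3 ^ u.length := by
      rw [hw] at hlen
      simp only [List.length_append, List.length_singleton] at hlen; omega
    have hkey : stewT (u ++ [g]) =
        (L ++ [p0] ++ R) ++ (L ++ [p1] ++ R) ++ (L ++ [p2] ++ R) := by
      rw [stewT_concat, hw, hp]
      rw [show (L ++ [B.bq] ++ R) ++ (L ++ [B.bq] ++ R) ++ (L ++ [B.bq] ++ R)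
          = L ++ (B.bq :: (R ++ L ++ (B.bq :: (R ++ L ++ (B.bq :: R))))) by simp,
        fill_append_noq _ _ _ hL, fill_bq_cons,
        show R ++ L ++ (B.bq :: (R ++ L ++ (B.bq :: R))) =
          (R ++ L) ++ (B.bq :: (R ++ L ++ (B.bq :: R))) by simp,
        fill_append_noq _ _ _ (by intro x hx; rcases List.mem_append.1 hx with h | h
                                  exacts [hR x h, hL x h]),
        fill_bq_cons,
        show R ++ L ++ (B.bq :: R) = (R ++ L) ++ (B.bq :: R) by simp,
        fill_append_noq _ _ _ (by intro x hx; rcases List.mem_append.1 hx with h | h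
                                  exacts [hR x h, hL x h]),
        fill_bq_cons]
      rw [fill_nil]; simp
    have hm3 : m < 3 * 3 ^ u.length := by
      have hKe : (u ++ [g]).length = u.length + 1 := by simp
      rw [hKe, pow_succ] at hm; omega
    have hpK : 0 < (3:ℕ) ^ u.length := by positivity
    obtain ⟨c, m', hclt, hm'lt, hcm⟩ :
        ∃ c m', c < 3 ∧ m' < 3 ^ u.length ∧ m = c * 3 ^ u.length + m' := by
      refine ⟨m / 3 ^ u.length, m % 3 ^ u.length,
        Nat.div_lt_of_lt_mul (by omega), Nat.mod_lt _ hpK, ?_⟩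
      rw [mul_comm]
      exact (Nat.div_add_mod m _).symm
    subst hcm
    have hmod : (c * 3 ^ u.length + m') % 3 ^ u.length = m' := by
      rw [mul_comm c, Nat.mul_add_mod, Nat.mod_eq_of_lt hm'lt]
    have hdiv : (c * 3 ^ u.length + m') / 3 ^ u.length = c := by
      rw [mul_comm, Nat.mul_add_div hpK, Nat.div_eq_of_lt hm'lt, Nat.add_zero]
    have hblock : ∀ pc : B, (L ++ [pc] ++ R).getD m' B.bq =
        if m' = hole u then pc else (stewT u).getD m' B.bq := by
      intro pc
      rcases lt_trichotomy m' L.length with h | h | h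
      · rw [if_neg (by omega), hw]
        rw [show L ++ [pc] ++ R = L ++ ([pc] ++ R) by simp,
            show L ++ [B.bq] ++ R = L ++ ([B.bq] ++ R) by simp,
            List.getD_append L ([pc] ++ R) B.bq m' h,
            List.getD_append L ([B.bq] ++ R) B.bq m' h]
      · rw [if_pos (by omega)]
        rw [show L ++ [pc] ++ R = L ++ ([pc] ++ R) by simp,
            List.getD_append_right L ([pc] ++ R) B.bq m' (le_of_eq h.symm), h,
            Nat.sub_self]
        rfl
      · rw [if_neg (by omega), hw]
        rw [show L ++ [pc] ++ R = L ++ ([pc] ++ R) by simp,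
            show L ++ [B.bq] ++ R = L ++ ([B.bq] ++ R) by simp,
            List.getD_append_right L ([pc] ++ R) B.bq m' (by omega),
            List.getD_append_right L ([B.bq] ++ R) B.bq m' (by omega)]
        have h1 : m' - L.length = (m' - L.length - 1) + 1 := by omega
        rw [h1]
        rfl
    have hlen' : ∀ pc : B, (L ++ [pc] ++ R).length = 3 ^ u.length := by
      intro pc; simp only [List.length_append, List.length_singleton]; omega
    have hgetD : (stewT (u ++ [g])).getD (c * 3 ^ u.length + m') B.bq =
        (L ++ [[p0, p1, p2].getD c B.bq] ++ R).getD m' B.bq := by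
      rw [hkey]
      interval_cases c
      · rw [show (L++[p0]++R) ++ (L++[p1]++R) ++ (L++[p2]++R)
            = (L++[p0]++R) ++ ((L++[p1]++R) ++ (L++[p2]++R)) by simp [List.append_assoc]]
        rw [show 0 * 3 ^ u.length + m' = m' by omega]
        rw [List.getD_append (L++[p0]++R) ((L++[p1]++R) ++ (L++[p2]++R)) B.bq m'
              (by rw [hlen']; omega)]
        rfl
      · rw [show (L++[p0]++R) ++ (L++[p1]++R) ++ (L++[p2]++R)
            = (L++[p0]++R) ++ ((L++[p1]++R) ++ (L++[p2]++R)) by simp [List.append_assoc]]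
        rw [List.getD_append_right (L++[p0]++R) ((L++[p1]++R) ++ (L++[p2]++R)) B.bq
              (1 * 3 ^ u.length + m') (by rw [hlen']; omega),
            List.getD_append (L++[p1]++R) (L++[p2]++R) B.bq
              (1 * 3 ^ u.length + m' - (L++[p0]++R).length)
              (by rw [hlen', hlen']; omega)]
        have hidx : 1 * 3 ^ u.length + m' - (L++[p0]++R).length = m' := by
          rw [hlen']; omega
        rw [hidx]
        rfl
      · rw [List.getD_append_right ((L++[p0]++R) ++ (L++[p1]++R)) (L++[p2]++R) B.bq
              (2 * 3 ^ u.length + m')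
              (by rw [List.length_append, hlen', hlen']; omega)]
        have hidx : 2 * 3 ^ u.length + m' - ((L++[p0]++R) ++ (L++[p1]++R)).length = m' := by
          rw [List.length_append, hlen', hlen']; omega
        rw [hidx]
        rfl
    rw [hgetD, hblock]
    have hsval : sval (u ++ [g]) (c * 3 ^ u.length + m') =
        if sval u (c * 3 ^ u.length + m') = B.bq then (pat g).getD c B.bq
        else sval u (c * 3 ^ u.length + m') := by
      rw [sval_append, sval_single, hdiv, Nat.mod_eq_of_lt hclt]
    rw [hsval]
    have hsvalm : sval u (c * 3 ^ u.length + m') = sval u m' := by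
      rw [← sval_mod u (c * 3 ^ u.length + m'), hmod, ← Nat.mod_eq_of_lt hm'lt, sval_mod]
    have hbq : sval u (c * 3 ^ u.length + m') = B.bq ↔ m' = hole u := by
      rw [sval_eq_bq_iff, hmod]
    by_cases hhq : m' = hole u
    · rw [if_pos hhq, if_pos (hbq.2 hhq), hp]
    · rw [if_neg hhq, if_neg (fun hh => hhq (hbq.1 hh)), ih m' hm'lt, hsvalm]

lemma prefT_length (t : ℕ → A) (r : ℕ) : (prefT t r).length = r := by
  simp [prefT]

lemma prefT_succ (t : ℕ → A) (r : ℕ) : prefT t (r + 1) = prefT t r ++ [t r] := by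
  unfold prefT
  rw [List.ofFn_succ']
  simp [List.concat_eq_append]

lemma prefT_prefix (t : ℕ → A) {r r' : ℕ} (h : r ≤ r') :
    ∃ v, prefT t r' = prefT t r ++ v := by
  induction r' with
  | zero => exact ⟨[], by simp [Nat.le_zero.1 h, prefT]⟩
  | succ n ihn =>
    rcases Nat.lt_or_ge r (n+1) with hlt | hge
    · obtain ⟨v, hv⟩ := ihn (by omega)
      exact ⟨v ++ [t n], by rw [prefT_succ, hv, List.append_assoc]⟩
    · have : r = n + 1 := by omega
      exact ⟨[], by simp [this]⟩

lemma stewInf_eval (t : ℕ → A) (m r : ℕ) (hmr : m < 3 ^ r)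
    (hne : sval (prefT t r) m ≠ B.bq) :
    stewInf t m = sval (prefT t r) m := by
  have hev : ∀ r' ≥ r, (stewT (prefT t r')).getD m B.bq = sval (prefT t r) m := by
    intro r' hr'
    obtain ⟨w, hw⟩ := prefT_prefix t hr'
    have hm' : m < 3 ^ r' := lt_of_lt_of_le hmr (Nat.pow_le_pow_right (by norm_num) hr')
    rw [stewT_getD _ m (by rw [prefT_length]; exact hm'), hw, sval_append, if_neg hne]
  have hex : ∃ v : B, ∃ R : ℕ, ∀ r' ≥ R,
      (stewT (prefT t r')).getD m B.bq = v :=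
    ⟨sval (prefT t r) m, r, hev⟩
  obtain ⟨R, hR⟩ := Classical.epsilon_spec hex
  have h1 := hR (max r R) (le_max_right _ _)
  have h2 := hev (max r R) (le_max_left _ _)
  unfold stewInf
  rw [← h1]
  exact h2

lemma stewInf_nonhole (t : ℕ → A) (K : ℕ) (b : B) (m : ℕ)
    (hm : m % 3 ^ K ≠ hole (prefT t K)) :
    stewInf t m = Xw (prefT t K) b m := by
  have hne : sval (prefT t K) m ≠ B.bq := by
    rw [ne_eq, sval_eq_bq_iff, prefT_length]; exact hm
  have hmr : m < 3 ^ max K (m + 1) :=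
    lt_of_lt_of_le (Nat.lt_pow_self (n := m) (a := 3) (by norm_num))
      (Nat.pow_le_pow_right (by norm_num) (by omega))
  obtain ⟨w, hw⟩ := prefT_prefix t (le_max_left K (m+1))
  have hne' : sval (prefT t (max K (m+1))) m ≠ B.bq := by
    rw [hw, sval_append, if_neg hne]; exact hne
  have := stewInf_eval t m (max K (m+1)) hmr hne'
  rw [this, hw, sval_append, if_neg hne]
  unfold Xw replQ
  rw [if_neg hne]

lemma stewInf_hole_val (t : ℕ → A) (K : ℕ) (b : B) (hb : b = B.b0 ∨ b = B.b1) (n : ℕ) :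
    ∃ J, J % 3 ^ K = hole (prefT t K) ∧ n ≤ J ∧ stewInf t J = b := by
  obtain ⟨d, hd3, hdq, hdv⟩ := pat_surj (t K) b hb
  have hpK : 0 < (3:ℕ) ^ K := by positivity
  have hholeK : hole (prefT t K) < 3 ^ K := by
    have := hole_lt (prefT t K); rwa [prefT_length] at this
  refine ⟨hole (prefT t K) + (d + 3 * (n + 1)) * 3 ^ K, ?_, ?_, ?_⟩
  · rw [Nat.add_mul_mod_self_right, Nat.mod_eq_of_lt hholeK]
  · calc n ≤ (d + 3 * (n + 1)) * 1 := by omega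
    _ ≤ (d + 3 * (n + 1)) * 3 ^ K := Nat.mul_le_mul_left _ hpK
    _ ≤ _ := Nat.le_add_left _ _
  · set J := hole (prefT t K) + (d + 3 * (n + 1)) * 3 ^ K with hJ
    have hsvalK1 : sval (prefT t (K + 1)) J = b := by
      rw [prefT_succ, sval_append, if_pos, prefT_length]
      · have hdivJ : J / 3 ^ K = d + 3 * (n + 1) := by
          rw [hJ, Nat.add_mul_div_right _ _ hpK, Nat.div_eq_of_lt hholeK, Nat.zero_add]
        rw [hdivJ, sval_single]
        have : (d + 3 * (n + 1)) % 3 = d := by omega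
        rw [this, hdv]
      · rw [sval_eq_bq_iff, prefT_length, hJ, Nat.add_mul_mod_self_right,
          Nat.mod_eq_of_lt hholeK]
    have hbne : b ≠ B.bq := by rcases hb with rfl | rfl <;> simp
    have hmr : J < 3 ^ max (K+1) (J + 1) :=
      lt_of_lt_of_le (Nat.lt_pow_self (n := J) (a := 3) (by norm_num))
        (Nat.pow_le_pow_right (by norm_num) (by omega))
    obtain ⟨w, hw⟩ := prefT_prefix t (le_max_left (K+1) (J+1))
    have hne' : sval (prefT t (max (K+1) (J+1))) J = b := by
      rw [hw, sval_append, hsvalK1, if_neg hbne]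
    rw [stewInf_eval t J _ hmr (by rw [hne']; exact hbne), hne']

/-! ### window lemmas -/

lemma win_length (u : List A) (b : B) (i n : ℕ) : (win u b i n).length = n := by
  simp [win]

lemma win_getD (u : List A) (b : B) (i n : ℕ) {j : ℕ} (hj : j < n) :
    (win u b i n).getD j B.bq = Xw u b (i + j) := by
  rw [List.getD_eq_getElem _ _ (by rw [win_length]; exact hj)]
  simp [win]

lemma win_mem_ne_bq (u : List A) {b : B} (hb : b = B.b0 ∨ b = B.b1) (i n : ℕ)
    {s : B} (hs : s ∈ win u b i n) : s ≠ B.bq := by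
  rw [win, List.mem_ofFn] at hs
  obtain ⟨k, hk⟩ := hs
  rw [← hk]
  exact Xw_ne_bq u hb _

lemma sval_hole (u : List A) : sval u (hole u) = B.bq := by
  rw [sval_eq_bq_iff, Nat.mod_eq_of_lt (hole_lt u)]

lemma Xw_hole (u : List A) (b : B) : Xw u b (hole u) = b := by
  unfold Xw replQ
  rw [sval_hole]
  simp

lemma Xw_cons (g : A) (u' : List A) (b : B) (j : ℕ) :
    Xw (g :: u') b j =
      if j % 3 = qv g then Xw u' b (j / 3) else (pat g).getD (j % 3) B.bq := by
  by_cases h : j % 3 = qv g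
  · rw [if_pos h]
    unfold Xw
    rw [show sval (g :: u') j = sval u' (j / 3) by rw [sval]; exact if_pos h]
  · rw [if_neg h]
    unfold Xw replQ
    rw [show sval (g :: u') j = (pat g).getD (j % 3) B.bq by rw [sval]; exact if_neg h]
    exact if_neg (pat_getD_ne_bq g (Nat.mod_lt _ (by norm_num)) h)

lemma win_add_pow (u : List A) (b : B) (i n : ℕ) :
    win u b (i + 3 ^ u.length) n = win u b i n := by
  unfold win
  congr 1
  funext k
  apply Xw_congr
  rw [show i + 3 ^ u.length + ↑k = (i + ↑k) + 3 ^ u.length by ring, Nat.add_mod_right]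

lemma win_add_mul_pow (u : List A) (b : B) (i n c : ℕ) :
    win u b (i + 3 ^ u.length * c) n = win u b i n := by
  induction c with
  | zero => rfl
  | succ c ih =>
    rw [show i + 3 ^ u.length * (c + 1) = (i + 3 ^ u.length * c) + 3 ^ u.length by ring,
      win_add_pow, ih]

lemma win_mod (u : List A) (b : B) (i n : ℕ) :
    win u b (i % 3 ^ u.length) n = win u b i n := by
  conv_rhs => rw [show i = i % 3 ^ u.length + 3 ^ u.length * (i / 3 ^ u.length) from
    (Nat.mod_add_div i _).symm]
  rw [win_add_mul_pow]

/-! ### the expansion map -/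

def aev (g : A) (e : ℕ) : ℕ := (3 + qv g - e) % 3

def lev (g : A) (n e : ℕ) : ℕ := (n - aev g e + 2) / 3

def Fmap (g : A) (e n : ℕ) (ω : List B) : List B :=
  List.ofFn fun j : Fin n =>
    if (e + j) % 3 = qv g then ω.getD ((j - aev g e) / 3) B.bq
    else (pat g).getD ((e + j) % 3) B.bq

lemma aev_lt (g : A) (e : ℕ) : aev g e < 3 := Nat.mod_lt _ (by norm_num)

lemma aev_eq (g : A) {e : ℕ} (he : e < 3) : (e + aev g e) % 3 = qv g := by
  have := qv_lt g
  unfold aev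
  omega

lemma win_decomp (g : A) (u' : List A) (b : B) (n i : ℕ) :
    win (g :: u') b i n =
      Fmap g (i % 3) n
        (win u' b ((i + aev g (i % 3)) / 3) (lev g n (i % 3))) := by
  have hq := qv_lt g
  have he3 : i % 3 < 3 := Nat.mod_lt _ (by norm_num)
  have haeq := aev_eq g he3
  have hae3 := aev_lt g (i % 3)
  have haed : aev g (i % 3) = (3 + qv g - i % 3) % 3 := rfl
  have hled : lev g n (i % 3) = (n - aev g (i % 3) + 2) / 3 := rfl
  apply List.ext_getElem (by simp [win, Fmap])
  intro j hj _
  rw [win] at hj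
  simp only [List.length_ofFn] at hj
  have hL : (win (g :: u') b i n)[j] = Xw (g :: u') b (i + j) := by
    simp [win]
  have hR : (Fmap g (i % 3) n
        (win u' b ((i + aev g (i % 3)) / 3) (lev g n (i % 3))))[j]'(by simpa [Fmap]) =
      if (i % 3 + j) % 3 = qv g then
        (win u' b ((i + aev g (i % 3)) / 3) (lev g n (i % 3))).getD
          ((j - aev g (i % 3)) / 3) B.bq
      else (pat g).getD ((i % 3 + j) % 3) B.bq := by
    simp [Fmap]
  rw [hL, hR, Xw_cons]
  by_cases h : (i % 3 + j) % 3 = qv g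
  · have hij : (i + j) % 3 = qv g := by omega
    rw [if_pos h, if_pos hij]
    have hjae : aev g (i % 3) ≤ j := by omega
    have hdiv : (i + j) / 3 = (i + aev g (i % 3)) / 3 + (j - aev g (i % 3)) / 3 := by
      omega
    have hlt : (j - aev g (i % 3)) / 3 < lev g n (i % 3) := by
      rw [hled]; omega
    rw [win_getD _ _ _ _ hlt, hdiv]
  · have hij : ¬((i + j) % 3 = qv g) := by omega
    rw [if_neg h, if_neg hij]
    have : (i + j) % 3 = (i % 3 + j) % 3 := by omega
    rw [this]

lemma Uset_length {u : List A} {n : ℕ} {w : List B} (hw : w ∈ Uset u n) : w.length = n := by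
  obtain ⟨b, hb, i, rfl⟩ := hw
  exact win_length u b i n

lemma Uset_step (g : A) (u' : List A) (hu' : u' ≠ []) (n : ℕ) (hn3 : 3 ≤ n)
    (hnK : n ≤ 3 ^ u'.length + 2)
    (IH : ∀ m, 1 ≤ m → m ≤ 3 ^ (u'.length - 1) + 2 → (Uset u' m).ncard = 2 * m) :
    (Uset (g :: u') n).ncard = 2 * n := by
  have hq := qv_lt g
  have hp' : 1 ≤ 3 ^ u'.length := Nat.one_le_pow _ _ (by norm_num)
  have hK1 : 1 ≤ u'.length := by
    cases u' with
    | nil => exact absurd rfl hu'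
    | cons x l => simp
  have hKsplit : 3 ^ u'.length = 3 * 3 ^ (u'.length - 1) := by
    conv_lhs => rw [show u'.length = (u'.length - 1) + 1 by omega]
    rw [pow_succ]; ring
  have hae3 : ∀ e, aev g e < 3 := aev_lt g
  have haed : ∀ e, aev g e = (3 + qv g - e) % 3 := fun _ => rfl
  have hled : ∀ e, lev g n e = (n - aev g e + 2) / 3 := fun _ => rfl
  have hle1 : ∀ e, 1 ≤ lev g n e := by
    intro e; have := hae3 e; rw [hled]; omega
  have hleK : ∀ e, lev g n e ≤ 3 ^ (u'.length - 1) + 2 := by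
    intro e; have := hae3 e; rw [hled]; omega
  set S : ℕ → Set (List B) := fun e => Fmap g e n '' Uset u' (lev g n e) with hS
  have Hmain : Uset (g :: u') n = S 0 ∪ S 1 ∪ S 2 := by
    apply Set.eq_of_subset_of_subset
    · rintro w ⟨b, hb, i, rfl⟩
      have hi3 : i % 3 < 3 := Nat.mod_lt _ (by norm_num)
      have hw : win (g :: u') b i n =
          Fmap g (i % 3) n (win u' b ((i + aev g (i % 3)) / 3) (lev g n (i % 3))) :=
        win_decomp g u' b n i
      have hmem : win u' b ((i + aev g (i % 3)) / 3) (lev g n (i % 3))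
          ∈ Uset u' (lev g n (i % 3)) := ⟨b, hb, _, rfl⟩
      interval_cases h : i % 3
      · exact Or.inl (Or.inl ⟨_, hmem, hw.symm⟩)
      · exact Or.inl (Or.inr ⟨_, hmem, hw.symm⟩)
      · exact Or.inr ⟨_, hmem, hw.symm⟩
    · have hsub : ∀ e, e < 3 → S e ⊆ Uset (g :: u') n := by
        rintro e he w ⟨ω, ⟨b, hb, i', rfl⟩, rfl⟩
        have hδ1 : (e + aev g e) / 3 ≤ 1 := by
          have := hae3 e; omega
        set i := 3 * (i' + 3 ^ u'.length - (e + aev g e) / 3) + e with hi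
        have hie : i % 3 = e := by simp only [hi]; omega
        have hidiv : (i + aev g e) / 3 = i' + 3 ^ u'.length := by
          have h1 := aev_eq g he
          have h2 := hae3 e
          simp only [hi]
          omega
        refine ⟨b, hb, i, ?_⟩
        rw [win_decomp g u' b n i, hie, hidiv,
          show i' + 3 ^ u'.length = i' + 3 ^ u'.length * 1 by ring,
          win_add_mul_pow]
      rintro w ((hw | hw) | hw)
      exacts [hsub 0 (by norm_num) hw, hsub 1 (by norm_num) hw, hsub 2 (by norm_num) hw]
  have hIHe : ∀ e, (Uset u' (lev g n e)).ncard = 2 * lev g n e :=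
    fun e => IH _ (hle1 e) (hleK e)
  have hfin : ∀ e, (Uset u' (lev g n e)).Finite := by
    intro e
    apply Set.finite_of_ncard_ne_zero
    rw [hIHe e]
    have := hle1 e; omega
  have hinj : ∀ e, e < 3 → Set.InjOn (Fmap g e n) (Uset u' (lev g n e)) := by
    intro e he ω hω ω₂ hω₂ heq
    have hl1 : ω.length = lev g n e := Uset_length hω
    have hl2 : ω₂.length = lev g n e := Uset_length hω₂
    apply List.ext_getElem (by rw [hl1, hl2])
    intro k hk _
    rw [hl1, hled] at hk
    have h1 := hae3 e
    have hj : aev g e + 3 * k < n := by omega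
    have hcomp : ∀ ω' : List B, (Fmap g e n ω').getD (aev g e + 3 * k) B.bq
        = ω'.getD k B.bq := by
      intro ω'
      unfold Fmap
      rw [List.getD_eq_getElem _ _ (by simpa using hj)]
      rw [List.getElem_ofFn]
      simp only [Fin.val_mk]
      have hc : (e + (aev g e + 3 * k)) % 3 = qv g := by
        have := aev_eq g he; omega
      rw [if_pos hc]
      congr 1
      omega
    have hkey := hcomp ω
    rw [heq, hcomp ω₂] at hkey
    rw [List.getD_eq_getElem _ _ (by omega), List.getD_eq_getElem _ _ (by omega)] at hkey
    exact hkey.symm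
  have hgetFmap : ∀ e (ω : List B) j, j < n → (e + j) % 3 ≠ qv g →
      (Fmap g e n ω).getD j B.bq = (pat g).getD ((e + j) % 3) B.bq := by
    intro e ω j hj hne
    unfold Fmap
    rw [List.getD_eq_getElem _ _ (by simpa using hj), List.getElem_ofFn, if_neg hne]
  have hdis : ∀ e e', e < 3 → e' < 3 → e ≠ e' → Disjoint (S e) (S e') := by
    intro e e' he he' hne
    rw [Set.disjoint_left]
    rintro w ⟨ω, hω, rfl⟩ ⟨ω', hω', heq⟩
    obtain ⟨j, hj3, hje, hje'⟩ :
        ∃ j, j < 3 ∧ (e + j) % 3 ≠ qv g ∧ (e' + j) % 3 ≠ qv g := by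
      have hq3 : qv g < 3 := qv_lt g
      interval_cases e <;> interval_cases e' <;> interval_cases h : qv g <;>
        first
          | exact ⟨0, by omega⟩
          | exact ⟨1, by omega⟩
          | exact ⟨2, by omega⟩
          | omega
    have h1 := hgetFmap e ω j (by omega) hje
    rw [← heq] at h1
    have h2 := hgetFmap e' ω' j (by omega) hje'
    rw [h1] at h2
    exact pat_inj g (Nat.mod_lt _ (by norm_num)) (Nat.mod_lt _ (by norm_num))
      (by omega) hje hje' h2
  have hcard : ∀ e, e < 3 → (S e).ncard = 2 * lev g n e := by
    intro e he
    rw [hS]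
    rw [Set.ncard_image_of_injOn (hinj e he), hIHe e]
  rw [Hmain]
  rw [Set.ncard_union_eq (by
      rw [Set.disjoint_union_left]
      exact ⟨hdis 0 2 (by norm_num) (by norm_num) (by norm_num),
        hdis 1 2 (by norm_num) (by norm_num) (by norm_num)⟩)
    (Set.Finite.union ((hfin 0).image _) ((hfin 1).image _)) ((hfin 2).image _)]
  rw [Set.ncard_union_eq (hdis 0 1 (by norm_num) (by norm_num) (by norm_num))
    ((hfin 0).image _) ((hfin 1).image _)]
  rw [hcard 0 (by norm_num), hcard 1 (by norm_num), hcard 2 (by norm_num)]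
  rw [hled 0, hled 1, hled 2, haed 0, haed 1, haed 2]
  interval_cases hqq : qv g <;> omega

/-! ### small cases -/

lemma win2_eq (u : List A) (b : B) (i : ℕ) : win u b i 2 = [Xw u b i, Xw u b (i+1)] := by
  unfold win
  apply List.ext_getElem (by simp)
  intro j hj _
  simp only [List.length_ofFn] at hj
  interval_cases j <;> simp

lemma mem2 (u : List A) {b : B} (hb : b = B.b0 ∨ b = B.b1) (i : ℕ) :
    [Xw u b i, Xw u b (i+1)] ∈ Uset u 2 :=
  ⟨b, hb, i, (win2_eq u b i).symm⟩

lemma Xw_hole_shift (u' : List A) (c : B) : Xw u' c (hole u' + 3 ^ u'.length) = c := by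
  rw [Xw_congr u' c (Nat.add_mod_right (hole u') (3 ^ u'.length)), Xw_hole]

lemma Uset_one (u : List A) : Uset u 1 = {[B.b0], [B.b1]} := by
  ext w
  constructor
  · rintro ⟨b, hb, i, rfl⟩
    have hw : win u b i 1 = [Xw u b i] := by
      unfold win
      apply List.ext_getElem (by simp)
      intro j hj _
      simp only [List.length_ofFn] at hj
      interval_cases j <;> simp
    rw [hw]
    have hne := Xw_ne_bq u hb i
    cases h : Xw u b i with
    | b0 => left; rfl
    | b1 => right; rfl
    | bq => exact absurd h hne
  · have hmem : ∀ c : B, c = B.b0 ∨ c = B.b1 → [c] ∈ Uset u 1 := by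
      intro c hc
      refine ⟨c, hc, hole u, ?_⟩
      have hw : win u c (hole u) 1 = [Xw u c (hole u)] := by
        unfold win
        apply List.ext_getElem (by simp)
        intro j hj _
        simp only [List.length_ofFn] at hj
        interval_cases j <;> simp
      rw [hw, Xw_hole]
    rintro (rfl | rfl)
    exacts [hmem B.b0 (Or.inl rfl), hmem B.b1 (Or.inr rfl)]

lemma cover4 {S : Set (List B)} {y z : B} (hy : y ≠ B.bq) (hz : z ≠ B.bq) (hyz : y ≠ z)
    (h1 : ∀ c, c = B.b0 ∨ c = B.b1 → [c, y] ∈ S)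
    (h2 : ∀ c, c = B.b0 ∨ c = B.b1 → [z, c] ∈ S)
    (h3 : [y, z] ∈ S) :
    ({[B.b0,B.b0],[B.b0,B.b1],[B.b1,B.b0],[B.b1,B.b1]} : Set (List B)) ⊆ S := by
  cases y with
  | bq => exact absurd rfl hy
  | b0 =>
    cases z with
    | bq => exact absurd rfl hz
    | b0 => exact absurd rfl hyz
    | b1 =>
      rintro w (rfl | rfl | rfl | rfl)
      exacts [h1 B.b0 (Or.inl rfl), h3, h1 B.b1 (Or.inr rfl), h2 B.b1 (Or.inr rfl)]
  | b1 =>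
    cases z with
    | bq => exact absurd rfl hz
    | b1 => exact absurd rfl hyz
    | b0 =>
      rintro w (rfl | rfl | rfl | rfl)
      exacts [h2 B.b0 (Or.inl rfl), h1 B.b0 (Or.inl rfl), h3, h1 B.b1 (Or.inr rfl)]

lemma Uset_two (g : A) (u' : List A) :
    Uset (g :: u') 2 = {[B.b0,B.b0],[B.b0,B.b1],[B.b1,B.b0],[B.b1,B.b1]} := by
  have hq := qv_lt g
  apply Set.eq_of_subset_of_subset
  · rintro w ⟨b, hb, i, rfl⟩
    rw [win2_eq]
    have n1 := Xw_ne_bq (g :: u') hb i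
    have n2 := Xw_ne_bq (g :: u') hb (i + 1)
    cases h1 : Xw (g :: u') b i with
    | bq => exact absurd h1 n1
    | b0 =>
      cases h2 : Xw (g :: u') b (i+1) with
      | bq => exact absurd h2 n2
      | b0 => left; rfl
      | b1 => right; left; rfl
    | b1 =>
      cases h2 : Xw (g :: u') b (i+1) with
      | bq => exact absurd h2 n2
      | b0 => right; right; left; rfl
      | b1 => right; right; right; rfl
  · set h0 := hole u' with hh0
    set p' := 3 ^ u'.length with hp'
    have hp'1 : 1 ≤ p' := Nat.one_le_pow _ _ (by norm_num)
    interval_cases hqv : qv g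
    · -- qv g = 0 : Y = pat getD 1, Z = pat getD 2
      apply cover4 (y := (pat g).getD 1 B.bq) (z := (pat g).getD 2 B.bq)
        (pat_getD_ne_bq g (by norm_num) (by omega))
        (pat_getD_ne_bq g (by norm_num) (by omega))
        (pat_inj g (by norm_num) (by norm_num) (by norm_num) (by omega) (by omega))
      · intro c hc
        have e1 : Xw (g :: u') c (3 * h0) = c := by
          rw [Xw_cons, if_pos (by omega), show 3 * h0 / 3 = h0 by omega]
          exact Xw_hole u' c
        have e2 : Xw (g :: u') c (3 * h0 + 1) = (pat g).getD 1 B.bq := by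
          rw [Xw_cons, if_neg (by omega), show (3 * h0 + 1) % 3 = 1 by omega]
        have := mem2 (g :: u') hc (3 * h0)
        rwa [e1, e2] at this
      · intro c hc
        have e1 : Xw (g :: u') c (3 * (h0 + p') - 1) = (pat g).getD 2 B.bq := by
          rw [Xw_cons, if_neg (by omega), show (3 * (h0 + p') - 1) % 3 = 2 by omega]
        have e2 : Xw (g :: u') c (3 * (h0 + p') - 1 + 1) = c := by
          rw [show 3 * (h0 + p') - 1 + 1 = 3 * (h0 + p') by omega,
            Xw_cons, if_pos (by omega), show 3 * (h0 + p') / 3 = h0 + p' by omega]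
          exact Xw_hole_shift u' c
        have := mem2 (g :: u') hc (3 * (h0 + p') - 1)
        rwa [e1, e2] at this
      · have e1 : Xw (g :: u') B.b0 1 = (pat g).getD 1 B.bq := by
          rw [Xw_cons, if_neg (by omega), show 1 % 3 = 1 by omega]
        have e2 : Xw (g :: u') B.b0 2 = (pat g).getD 2 B.bq := by
          rw [Xw_cons, if_neg (by omega), show 2 % 3 = 2 by omega]
        have := mem2 (g :: u') (Or.inl rfl) 1
        rwa [e1, e2] at this
    · -- qv g = 1 : Y = pat getD 2, Z = pat getD 0
      apply cover4 (y := (pat g).getD 2 B.bq) (z := (pat g).getD 0 B.bq)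
        (pat_getD_ne_bq g (by norm_num) (by omega))
        (pat_getD_ne_bq g (by norm_num) (by omega))
        (pat_inj g (by norm_num) (by norm_num) (by norm_num) (by omega) (by omega))
      · intro c hc
        have e1 : Xw (g :: u') c (3 * h0 + 1) = c := by
          rw [Xw_cons, if_pos (by omega), show (3 * h0 + 1) / 3 = h0 by omega]
          exact Xw_hole u' c
        have e2 : Xw (g :: u') c (3 * h0 + 1 + 1) = (pat g).getD 2 B.bq := by
          rw [Xw_cons, if_neg (by omega), show (3 * h0 + 1 + 1) % 3 = 2 by omega]
        have := mem2 (g :: u') hc (3 * h0 + 1)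
        rwa [e1, e2] at this
      · intro c hc
        have e1 : Xw (g :: u') c (3 * h0) = (pat g).getD 0 B.bq := by
          rw [Xw_cons, if_neg (by omega), show (3 * h0) % 3 = 0 by omega]
        have e2 : Xw (g :: u') c (3 * h0 + 1) = c := by
          rw [Xw_cons, if_pos (by omega), show (3 * h0 + 1) / 3 = h0 by omega]
          exact Xw_hole u' c
        have := mem2 (g :: u') hc (3 * h0)
        rwa [e1, e2] at this
      · have e1 : Xw (g :: u') B.b0 2 = (pat g).getD 2 B.bq := by
          rw [Xw_cons, if_neg (by omega), show 2 % 3 = 2 by omega]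
        have e2 : Xw (g :: u') B.b0 3 = (pat g).getD 0 B.bq := by
          rw [Xw_cons, if_neg (by omega), show 3 % 3 = 0 by omega]
        have := mem2 (g :: u') (Or.inl rfl) 2
        rwa [e1, e2] at this
    · -- qv g = 2 : Y = pat getD 0, Z = pat getD 1
      apply cover4 (y := (pat g).getD 0 B.bq) (z := (pat g).getD 1 B.bq)
        (pat_getD_ne_bq g (by norm_num) (by omega))
        (pat_getD_ne_bq g (by norm_num) (by omega))
        (pat_inj g (by norm_num) (by norm_num) (by norm_num) (by omega) (by omega))
      · intro c hc
        have e1 : Xw (g :: u') c (3 * h0 + 2) = c := by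
          rw [Xw_cons, if_pos (by omega), show (3 * h0 + 2) / 3 = h0 by omega]
          exact Xw_hole u' c
        have e2 : Xw (g :: u') c (3 * h0 + 2 + 1) = (pat g).getD 0 B.bq := by
          rw [Xw_cons, if_neg (by omega), show (3 * h0 + 2 + 1) % 3 = 0 by omega]
        have := mem2 (g :: u') hc (3 * h0 + 2)
        rwa [e1, e2] at this
      · intro c hc
        have e1 : Xw (g :: u') c (3 * h0 + 1) = (pat g).getD 1 B.bq := by
          rw [Xw_cons, if_neg (by omega), show (3 * h0 + 1) % 3 = 1 by omega]
        have e2 : Xw (g :: u') c (3 * h0 + 1 + 1) = c := by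
          rw [Xw_cons, if_pos (by omega), show (3 * h0 + 1 + 1) / 3 = h0 by omega]
          exact Xw_hole u' c
        have := mem2 (g :: u') hc (3 * h0 + 1)
        rwa [e1, e2] at this
      · have e1 : Xw (g :: u') B.b0 0 = (pat g).getD 0 B.bq := by
          rw [Xw_cons, if_neg (by omega), show 0 % 3 = 0 by omega]
        have e2 : Xw (g :: u') B.b0 1 = (pat g).getD 1 B.bq := by
          rw [Xw_cons, if_neg (by omega), show 1 % 3 = 1 by omega]
        have := mem2 (g :: u') (Or.inl rfl) 0
        rwa [e1, e2] at this

lemma Uset_single3_a : Uset [A.a] 3 = ({[B.b0, B.b1, B.b0], [B.b1, B.b0, B.b0], [B.b0, B.b0, B.b1], [B.b0, B.b1, B.b1], [B.b1, B.b1, B.b0], [B.b1, B.b0, B.b1]} : Set (List B)) := by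
  have e1 : win [A.a] B.b0 0 3 = [B.b0, B.b1, B.b0] := by decide
  have e2 : win [A.a] B.b0 1 3 = [B.b1, B.b0, B.b0] := by decide
  have e3 : win [A.a] B.b0 2 3 = [B.b0, B.b0, B.b1] := by decide
  have e4 : win [A.a] B.b1 0 3 = [B.b0, B.b1, B.b1] := by decide
  have e5 : win [A.a] B.b1 1 3 = [B.b1, B.b1, B.b0] := by decide
  have e6 : win [A.a] B.b1 2 3 = [B.b1, B.b0, B.b1] := by decide
  ext w
  constructor
  · rintro ⟨b, hb, i, rfl⟩
    have hw := win_mod [A.a] b i 3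
    simp only [List.length_singleton, pow_one] at hw
    have he3 : i % 3 < 3 := Nat.mod_lt _ (by norm_num)
    set e := i % 3 with he
    rcases hb with rfl | rfl <;> interval_cases e <;> rw [← hw] <;>
      simp [e1, e2, e3, e4, e5, e6]
  · rintro (rfl | rfl | rfl | rfl | rfl | rfl)
    exacts [⟨B.b0, Or.inl rfl, 0, e1.symm⟩, ⟨B.b0, Or.inl rfl, 1, e2.symm⟩, ⟨B.b0, Or.inl rfl, 2, e3.symm⟩, ⟨B.b1, Or.inr rfl, 0, e4.symm⟩, ⟨B.b1, Or.inr rfl, 1, e5.symm⟩, ⟨B.b1, Or.inr rfl, 2, e6.symm⟩]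

lemma Uset3_a : (Uset [A.a] 3).ncard = 6 := by
  rw [Uset_single3_a,
    show ({[B.b0, B.b1, B.b0], [B.b1, B.b0, B.b0], [B.b0, B.b0, B.b1], [B.b0, B.b1, B.b1], [B.b1, B.b1, B.b0], [B.b1, B.b0, B.b1]} : Set (List B)) = (↑({[B.b0, B.b1, B.b0], [B.b1, B.b0, B.b0], [B.b0, B.b0, B.b1], [B.b0, B.b1, B.b1], [B.b1, B.b1, B.b0], [B.b1, B.b0, B.b1]} : Finset (List B)) : Set (List B)) by simp,
    Set.ncard_coe_finset]
  decide


lemma Uset_single3_b : Uset [A.b] 3 = ({[B.b1, B.b0, B.b0], [B.b0, B.b0, B.b1], [B.b0, B.b1, B.b0], [B.b1, B.b0, B.b1], [B.b0, B.b1, B.b1], [B.b1, B.b1, B.b0]} : Set (List B)) := by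
  have e1 : win [A.b] B.b0 0 3 = [B.b1, B.b0, B.b0] := by decide
  have e2 : win [A.b] B.b0 1 3 = [B.b0, B.b0, B.b1] := by decide
  have e3 : win [A.b] B.b0 2 3 = [B.b0, B.b1, B.b0] := by decide
  have e4 : win [A.b] B.b1 0 3 = [B.b1, B.b0, B.b1] := by decide
  have e5 : win [A.b] B.b1 1 3 = [B.b0, B.b1, B.b1] := by decide
  have e6 : win [A.b] B.b1 2 3 = [B.b1, B.b1, B.b0] := by decide
  ext w
  constructor
  · rintro ⟨b, hb, i, rfl⟩
    have hw := win_mod [A.b] b i 3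
    simp only [List.length_singleton, pow_one] at hw
    have he3 : i % 3 < 3 := Nat.mod_lt _ (by norm_num)
    set e := i % 3 with he
    rcases hb with rfl | rfl <;> interval_cases e <;> rw [← hw] <;>
      simp [e1, e2, e3, e4, e5, e6]
  · rintro (rfl | rfl | rfl | rfl | rfl | rfl)
    exacts [⟨B.b0, Or.inl rfl, 0, e1.symm⟩, ⟨B.b0, Or.inl rfl, 1, e2.symm⟩, ⟨B.b0, Or.inl rfl, 2, e3.symm⟩, ⟨B.b1, Or.inr rfl, 0, e4.symm⟩, ⟨B.b1, Or.inr rfl, 1, e5.symm⟩, ⟨B.b1, Or.inr rfl, 2, e6.symm⟩]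

lemma Uset3_b : (Uset [A.b] 3).ncard = 6 := by
  rw [Uset_single3_b,
    show ({[B.b1, B.b0, B.b0], [B.b0, B.b0, B.b1], [B.b0, B.b1, B.b0], [B.b1, B.b0, B.b1], [B.b0, B.b1, B.b1], [B.b1, B.b1, B.b0]} : Set (List B)) = (↑({[B.b1, B.b0, B.b0], [B.b0, B.b0, B.b1], [B.b0, B.b1, B.b0], [B.b1, B.b0, B.b1], [B.b0, B.b1, B.b1], [B.b1, B.b1, B.b0]} : Finset (List B)) : Set (List B)) by simp,
    Set.ncard_coe_finset]
  decide


lemma Uset_single3_c : Uset [A.c] 3 = ({[B.b0, B.b0, B.b1], [B.b0, B.b1, B.b0], [B.b1, B.b0, B.b0], [B.b0, B.b1, B.b1], [B.b1, B.b1, B.b0], [B.b1, B.b0, B.b1]} : Set (List B)) := by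
  have e1 : win [A.c] B.b0 0 3 = [B.b0, B.b0, B.b1] := by decide
  have e2 : win [A.c] B.b0 1 3 = [B.b0, B.b1, B.b0] := by decide
  have e3 : win [A.c] B.b0 2 3 = [B.b1, B.b0, B.b0] := by decide
  have e4 : win [A.c] B.b1 0 3 = [B.b0, B.b1, B.b1] := by decide
  have e5 : win [A.c] B.b1 1 3 = [B.b1, B.b1, B.b0] := by decide
  have e6 : win [A.c] B.b1 2 3 = [B.b1, B.b0, B.b1] := by decide
  ext w
  constructor
  · rintro ⟨b, hb, i, rfl⟩
    have hw := win_mod [A.c] b i 3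
    simp only [List.length_singleton, pow_one] at hw
    have he3 : i % 3 < 3 := Nat.mod_lt _ (by norm_num)
    set e := i % 3 with he
    rcases hb with rfl | rfl <;> interval_cases e <;> rw [← hw] <;>
      simp [e1, e2, e3, e4, e5, e6]
  · rintro (rfl | rfl | rfl | rfl | rfl | rfl)
    exacts [⟨B.b0, Or.inl rfl, 0, e1.symm⟩, ⟨B.b0, Or.inl rfl, 1, e2.symm⟩, ⟨B.b0, Or.inl rfl, 2, e3.symm⟩, ⟨B.b1, Or.inr rfl, 0, e4.symm⟩, ⟨B.b1, Or.inr rfl, 1, e5.symm⟩, ⟨B.b1, Or.inr rfl, 2, e6.symm⟩]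

lemma Uset3_c : (Uset [A.c] 3).ncard = 6 := by
  rw [Uset_single3_c,
    show ({[B.b0, B.b0, B.b1], [B.b0, B.b1, B.b0], [B.b1, B.b0, B.b0], [B.b0, B.b1, B.b1], [B.b1, B.b1, B.b0], [B.b1, B.b0, B.b1]} : Set (List B)) = (↑({[B.b0, B.b0, B.b1], [B.b0, B.b1, B.b0], [B.b1, B.b0, B.b0], [B.b0, B.b1, B.b1], [B.b1, B.b1, B.b0], [B.b1, B.b0, B.b1]} : Finset (List B)) : Set (List B)) by simp,
    Set.ncard_coe_finset]
  decide


lemma Uset_single3_d : Uset [A.d] 3 = ({[B.b1, B.b0, B.b0], [B.b0, B.b0, B.b1], [B.b0, B.b1, B.b0], [B.b1, B.b1, B.b0], [B.b1, B.b0, B.b1], [B.b0, B.b1, B.b1]} : Set (List B)) := by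
  have e1 : win [A.d] B.b0 0 3 = [B.b1, B.b0, B.b0] := by decide
  have e2 : win [A.d] B.b0 1 3 = [B.b0, B.b0, B.b1] := by decide
  have e3 : win [A.d] B.b0 2 3 = [B.b0, B.b1, B.b0] := by decide
  have e4 : win [A.d] B.b1 0 3 = [B.b1, B.b1, B.b0] := by decide
  have e5 : win [A.d] B.b1 1 3 = [B.b1, B.b0, B.b1] := by decide
  have e6 : win [A.d] B.b1 2 3 = [B.b0, B.b1, B.b1] := by decide
  ext w
  constructor
  · rintro ⟨b, hb, i, rfl⟩
    have hw := win_mod [A.d] b i 3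
    simp only [List.length_singleton, pow_one] at hw
    have he3 : i % 3 < 3 := Nat.mod_lt _ (by norm_num)
    set e := i % 3 with he
    rcases hb with rfl | rfl <;> interval_cases e <;> rw [← hw] <;>
      simp [e1, e2, e3, e4, e5, e6]
  · rintro (rfl | rfl | rfl | rfl | rfl | rfl)
    exacts [⟨B.b0, Or.inl rfl, 0, e1.symm⟩, ⟨B.b0, Or.inl rfl, 1, e2.symm⟩, ⟨B.b0, Or.inl rfl, 2, e3.symm⟩, ⟨B.b1, Or.inr rfl, 0, e4.symm⟩, ⟨B.b1, Or.inr rfl, 1, e5.symm⟩, ⟨B.b1, Or.inr rfl, 2, e6.symm⟩]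

lemma Uset3_d : (Uset [A.d] 3).ncard = 6 := by
  rw [Uset_single3_d,
    show ({[B.b1, B.b0, B.b0], [B.b0, B.b0, B.b1], [B.b0, B.b1, B.b0], [B.b1, B.b1, B.b0], [B.b1, B.b0, B.b1], [B.b0, B.b1, B.b1]} : Set (List B)) = (↑({[B.b1, B.b0, B.b0], [B.b0, B.b0, B.b1], [B.b0, B.b1, B.b0], [B.b1, B.b1, B.b0], [B.b1, B.b0, B.b1], [B.b0, B.b1, B.b1]} : Finset (List B)) : Set (List B)) by simp,
    Set.ncard_coe_finset]
  decide


lemma Uset_single3_e : Uset [A.e] 3 = ({[B.b0, B.b0, B.b1], [B.b0, B.b1, B.b0], [B.b1, B.b0, B.b0], [B.b1, B.b0, B.b1], [B.b0, B.b1, B.b1], [B.b1, B.b1, B.b0]} : Set (List B)) := by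
  have e1 : win [A.e] B.b0 0 3 = [B.b0, B.b0, B.b1] := by decide
  have e2 : win [A.e] B.b0 1 3 = [B.b0, B.b1, B.b0] := by decide
  have e3 : win [A.e] B.b0 2 3 = [B.b1, B.b0, B.b0] := by decide
  have e4 : win [A.e] B.b1 0 3 = [B.b1, B.b0, B.b1] := by decide
  have e5 : win [A.e] B.b1 1 3 = [B.b0, B.b1, B.b1] := by decide
  have e6 : win [A.e] B.b1 2 3 = [B.b1, B.b1, B.b0] := by decide
  ext w
  constructor
  · rintro ⟨b, hb, i, rfl⟩
    have hw := win_mod [A.e] b i 3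
    simp only [List.length_singleton, pow_one] at hw
    have he3 : i % 3 < 3 := Nat.mod_lt _ (by norm_num)
    set e := i % 3 with he
    rcases hb with rfl | rfl <;> interval_cases e <;> rw [← hw] <;>
      simp [e1, e2, e3, e4, e5, e6]
  · rintro (rfl | rfl | rfl | rfl | rfl | rfl)
    exacts [⟨B.b0, Or.inl rfl, 0, e1.symm⟩, ⟨B.b0, Or.inl rfl, 1, e2.symm⟩, ⟨B.b0, Or.inl rfl, 2, e3.symm⟩, ⟨B.b1, Or.inr rfl, 0, e4.symm⟩, ⟨B.b1, Or.inr rfl, 1, e5.symm⟩, ⟨B.b1, Or.inr rfl, 2, e6.symm⟩]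

lemma Uset3_e : (Uset [A.e] 3).ncard = 6 := by
  rw [Uset_single3_e,
    show ({[B.b0, B.b0, B.b1], [B.b0, B.b1, B.b0], [B.b1, B.b0, B.b0], [B.b1, B.b0, B.b1], [B.b0, B.b1, B.b1], [B.b1, B.b1, B.b0]} : Set (List B)) = (↑({[B.b0, B.b0, B.b1], [B.b0, B.b1, B.b0], [B.b1, B.b0, B.b0], [B.b1, B.b0, B.b1], [B.b0, B.b1, B.b1], [B.b1, B.b1, B.b0]} : Finset (List B)) : Set (List B)) by simp,
    Set.ncard_coe_finset]
  decide


lemma Uset_single3_f : Uset [A.f] 3 = ({[B.b0, B.b1, B.b0], [B.b1, B.b0, B.b0], [B.b0, B.b0, B.b1], [B.b1, B.b1, B.b0], [B.b1, B.b0, B.b1], [B.b0, B.b1, B.b1]} : Set (List B)) := by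
  have e1 : win [A.f] B.b0 0 3 = [B.b0, B.b1, B.b0] := by decide
  have e2 : win [A.f] B.b0 1 3 = [B.b1, B.b0, B.b0] := by decide
  have e3 : win [A.f] B.b0 2 3 = [B.b0, B.b0, B.b1] := by decide
  have e4 : win [A.f] B.b1 0 3 = [B.b1, B.b1, B.b0] := by decide
  have e5 : win [A.f] B.b1 1 3 = [B.b1, B.b0, B.b1] := by decide
  have e6 : win [A.f] B.b1 2 3 = [B.b0, B.b1, B.b1] := by decide
  ext w
  constructor
  · rintro ⟨b, hb, i, rfl⟩
    have hw := win_mod [A.f] b i 3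
    simp only [List.length_singleton, pow_one] at hw
    have he3 : i % 3 < 3 := Nat.mod_lt _ (by norm_num)
    set e := i % 3 with he
    rcases hb with rfl | rfl <;> interval_cases e <;> rw [← hw] <;>
      simp [e1, e2, e3, e4, e5, e6]
  · rintro (rfl | rfl | rfl | rfl | rfl | rfl)
    exacts [⟨B.b0, Or.inl rfl, 0, e1.symm⟩, ⟨B.b0, Or.inl rfl, 1, e2.symm⟩, ⟨B.b0, Or.inl rfl, 2, e3.symm⟩, ⟨B.b1, Or.inr rfl, 0, e4.symm⟩, ⟨B.b1, Or.inr rfl, 1, e5.symm⟩, ⟨B.b1, Or.inr rfl, 2, e6.symm⟩]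

lemma Uset3_f : (Uset [A.f] 3).ncard = 6 := by
  rw [Uset_single3_f,
    show ({[B.b0, B.b1, B.b0], [B.b1, B.b0, B.b0], [B.b0, B.b0, B.b1], [B.b1, B.b1, B.b0], [B.b1, B.b0, B.b1], [B.b0, B.b1, B.b1]} : Set (List B)) = (↑({[B.b0, B.b1, B.b0], [B.b1, B.b0, B.b0], [B.b0, B.b0, B.b1], [B.b1, B.b1, B.b0], [B.b1, B.b0, B.b1], [B.b0, B.b1, B.b1]} : Finset (List B)) : Set (List B)) by simp,
    Set.ncard_coe_finset]
  decide

theorem Uset_ncard : ∀ (u : List A), u ≠ [] → ∀ n, 1 ≤ n →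
    n ≤ 3 ^ (u.length - 1) + 2 → (Uset u n).ncard = 2 * n := by
  intro u
  induction u with
  | nil => intro h; exact absurd rfl h
  | cons g u' ih =>
    intro _ n h1 h2
    rcases Nat.lt_or_ge n 3 with h3 | h3
    · interval_cases n
      · rw [Uset_one, Set.ncard_pair (by simp)]
      · rw [Uset_two g u',
          show ({[B.b0,B.b0],[B.b0,B.b1],[B.b1,B.b0],[B.b1,B.b1]} : Set (List B)) =
            (↑({[B.b0,B.b0],[B.b0,B.b1],[B.b1,B.b0],[B.b1,B.b1]} : Finset (List B)) :
              Set (List B)) by simp, Set.ncard_coe_finset]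
        decide
    · cases u' with
      | nil =>
        have hn3 : n = 3 := by simp at h2; omega
        subst hn3
        cases g
        exacts [Uset3_a, Uset3_b, Uset3_c, Uset3_d, Uset3_e, Uset3_f]
      | cons g2 l =>
        refine Uset_step g (g2 :: l) (by simp) n h3 ?_
          (fun m hm1 hm2 => ih (by simp) m hm1 hm2)
        simp only [List.length_cons] at h2 ⊢
        simpa using h2

theorem factor_set_eq (t : ℕ → A) (n : ℕ) (hn : 1 ≤ n) :
    {w : List B | w.length = n ∧ (∀ s ∈ w, s ≠ B.bq) ∧
      ∃ i : ℕ, ∀ j : ℕ, j < w.length → w.getD j B.bq = stewInf t (i + j)} =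
    Uset (prefT t n) n := by
  have hulen : (prefT t n).length = n := prefT_length t n
  have hnp : n ≤ 3 ^ n := (Nat.lt_pow_self (n := n) (a := 3) (by norm_num)).le
  have hcancel : ∀ i j j' : ℕ, j < n → j' < n →
      (i + j) % 3 ^ n = (i + j') % 3 ^ n → j = j' := by
    intro i j j' hj hj' h
    have h5 : j % 3 ^ n = j' % 3 ^ n := Nat.ModEq.add_left_cancel' i h
    rwa [Nat.mod_eq_of_lt (lt_of_lt_of_le hj hnp),
      Nat.mod_eq_of_lt (lt_of_lt_of_le hj' hnp)] at h5
  ext w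
  constructor
  · rintro ⟨hlen, hbool, i, hfac⟩
    by_cases hex : ∃ j, j < n ∧ (i + j) % 3 ^ n = hole (prefT t n)
    · obtain ⟨j₀, hj₀n, hj₀⟩ := hex
      have hbmem : w.getD j₀ B.bq ∈ w := by
        rw [List.getD_eq_getElem _ _ (by omega)]
        exact List.getElem_mem _
      have hbb : w.getD j₀ B.bq = B.b0 ∨ w.getD j₀ B.bq = B.b1 := by
        have := hbool _ hbmem
        cases h : w.getD j₀ B.bq with
        | b0 => exact Or.inl rfl
        | b1 => exact Or.inr rfl
        | bq => exact absurd h this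
      refine ⟨w.getD j₀ B.bq, hbb, i, ?_⟩
      apply List.ext_getElem (by rw [hlen, win_length])
      intro j hj hj2
      rw [hlen] at hj
      have hwin : (win (prefT t n) (w.getD j₀ B.bq) i n)[j]'hj2
          = Xw (prefT t n) (w.getD j₀ B.bq) (i + j) := by
        simp [win]
      rw [hwin, ← List.getD_eq_getElem w B.bq (by omega)]
      by_cases hjj : j = j₀
      · subst hjj
        have hbqv : sval (prefT t n) (i + j) = B.bq := by
          rw [sval_eq_bq_iff, hulen]
          exact hj₀
        unfold Xw replQ
        rw [hbqv, if_pos rfl]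
      · have hne : (i + j) % 3 ^ n ≠ hole (prefT t n) := by
          intro hcon
          exact hjj (hcancel i j j₀ hj hj₀n (by rw [hcon, hj₀]))
        rw [hfac j (by omega)]
        exact stewInf_nonhole t n (w.getD j₀ B.bq) (i + j) hne
    · push_neg at hex
      refine ⟨B.b0, Or.inl rfl, i, ?_⟩
      apply List.ext_getElem (by rw [hlen, win_length])
      intro j hj hj2
      rw [hlen] at hj
      have hwin : (win (prefT t n) B.b0 i n)[j]'hj2
          = Xw (prefT t n) B.b0 (i + j) := by
        simp [win]
      rw [hwin, ← List.getD_eq_getElem w B.bq (by omega), hfac j (by omega)]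
      exact stewInf_nonhole t n B.b0 (i + j) (hex j hj)
  · rintro ⟨b, hb, i, rfl⟩
    refine ⟨win_length _ _ _ _, fun s hs => win_mem_ne_bq _ hb _ _ hs, ?_⟩
    by_cases hex : ∃ j, j < n ∧ (i + j) % 3 ^ n = hole (prefT t n)
    · obtain ⟨j₀, hj₀n, hj₀⟩ := hex
      obtain ⟨J, hJmod, hJge, hJval⟩ := stewInf_hole_val t n b hb n
      refine ⟨J - j₀, ?_⟩
      intro j hj
      rw [win_length] at hj
      rw [win_getD _ _ _ _ hj]
      by_cases hjj : j = j₀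
      · subst hjj
        rw [show J - j + j = J by omega, hJval]
        have hbqv : sval (prefT t n) (i + j) = B.bq := by
          rw [sval_eq_bq_iff, hulen]
          exact hj₀
        unfold Xw replQ
        rw [hbqv, if_pos rfl]
      · have hJeq : J % 3 ^ n = (i + j₀) % 3 ^ n := by rw [hJmod, hj₀]
        have hmodeq : (J - j₀ + j) % 3 ^ n = (i + j) % 3 ^ n := by
          have h6 : (J - j₀ + j) + j₀ ≡ (i + j) + j₀ [MOD 3 ^ n] := by
            have h7 : J + j ≡ (i + j₀) + j [MOD 3 ^ n] := Nat.ModEq.add_right j hJeq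
            have h8 : J - j₀ + j + j₀ = J + j := by omega
            have h9 : i + j₀ + j = (i + j) + j₀ := by ring
            rw [h8]
            rw [h9] at h7
            exact h7
          exact Nat.ModEq.add_right_cancel' j₀ h6
        have hnh : (i + j) % 3 ^ n ≠ hole (prefT t n) := by
          intro hcon
          exact hjj (hcancel i j j₀ hj hj₀n (by rw [hcon, hj₀]))
        have h10 := stewInf_nonhole t n b (J - j₀ + j) (by rw [hmodeq]; exact hnh)
        rw [h10]
        exact (Xw_congr (prefT t n) b (by rw [hulen]; exact hmodeq)).symm
    · push_neg at hex
      refine ⟨i, ?_⟩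
      intro j hj
      rw [win_length] at hj
      rw [win_getD _ _ _ _ hj]
      exact (stewInf_nonhole t n b (i + j) (hex j hj)).symm

theorem final_count (t : ℕ → A) (n : ℕ) (hn : 1 ≤ n) :
    {w : List B | w.length = n ∧ (∀ s ∈ w, s ≠ B.bq) ∧
      ∃ i : ℕ, ∀ j : ℕ, j < w.length → w.getD j B.bq = stewInf t (i + j)}.ncard = 2 * n := by
  rw [factor_set_eq t n hn]
  apply Uset_ncard (prefT t n) ?_ n hn
  · rw [prefT_length]
    have := Nat.lt_pow_self (n := n - 1) (show 1 < 3 by norm_num)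
    omega
  · intro h
    have := prefT_length t n
    rw [h] at this
    simp at this
    omega

theorem stmt_12 (t : ℕ → A) (n : ℕ) (hn : 1 ≤ n) :
    {w : List B | w.length = n ∧ (∀ s ∈ w, s ≠ B.bq) ∧
      FactorOf w (stewInf t)}.ncard = 2 * n := by
  exact final_count t n hn
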